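/- arXiv:1609.00794 — 2 statements merged into one kernel-verified Lean document; each statement's English description precedes it below -/
import Mathlib

section
/- Suppose inf_{t∈ℝ} {a₁(t) − κ|a₂(t)|} > 2(χ)₊, and let (ū, u̲) be a solution of the comparison ODE system (with a_i⁻ = a_i⁺ = a_i) on [t₀, ∞) with 0 < u̲(t₀) ≤ ū(t₀). Then: (i) for all t ≥ t₀, (d/dt) ln(ū(t)/u̲(t)) = −(a₁(t) − κ|a₂(t)| − 2(χ)₊)(ū(t) − u̲(t)) ≤ 0, so t ↦ ū(t)/u̲(t) is nonincreasing and ū(t)/u̲(t) ≤ ū(t₀)/u̲(t₀); (ii) if moreover m := inf_{t ≥ t₀} ū(t) > 0, then 0 ≤ ln(ū(t)/u̲(t)) ≤ e^{−ε₀(t − t₀)} ln(ū(t₀)/u̲(t₀)) for all t ≥ t₀, where ε₀ = (inf_{t∈ℝ}{a₁(t) − κ|a₂(t)| − 2(χ)₊}) · m · u̲(t₀)/ū(t₀) > 0; in particular ū(t) − u̲(t) → 0 as t → ∞. -/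
/-!
Along a solution, `L = log (ū / u̲)` satisfies `L' = -(a₁ - κ|a₂| - 2(χ)₊)(ū - u̲)`: the
logistic terms cancel and the cross terms combine into `κ|a₂|`. Both `u̲` and `ū - u̲` solve linear
equations `f' = c(t) f`, so they keep the sign they have at `t₀`; hence `L' ≤ 0`. The elementary
bounds `u̲ L ≤ ū - u̲ ≤ ū L`, together with `u̲ ≥ m u̲(t₀)/ū(t₀)` (the ratio decreases), turn this
into `L' ≤ -ε₀ L`, and Grönwall gives the exponential decay. Finally `ū` is bounded by a logistic
comparison, so `ū - u̲ ≤ ū L → 0`.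
-/

/-- `f : ℝ → ℝ` is continuous and bounded. -/
def ContBdd (f : ℝ → ℝ) : Prop :=
  Continuous f ∧ BddAbove (Set.range f) ∧ BddBelow (Set.range f)

/-- `(ub, lb)` solves the comparison ODE system (with `aᵢ⁻ = aᵢ⁺ = aᵢ`)
`ū' = (χ)₊ ū(ū − u̲) + ū[a₀(t) − a₁(t)ū − κ(a₂(t))₊ u̲ + κ(a₂(t))₋ ū]`,
`u̲' = (χ)₊ u̲(u̲ − ū) + u̲[a₀(t) − a₁(t)u̲ − κ(a₂(t))₊ ū + κ(a₂(t))₋ u̲]`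
on the interval `[t₀, ∞)`. -/
def CompODESystemOn (χ κ : ℝ) (a₀ a₁ a₂ : ℝ → ℝ) (t₀ : ℝ) (ub lb : ℝ → ℝ) : Prop :=
  ∀ t ∈ Set.Ici t₀,
    HasDerivWithinAt ub
      (max χ 0 * ub t * (ub t - lb t) +
        ub t * (a₀ t - a₁ t * ub t - κ * max (a₂ t) 0 * lb t
          + κ * max (-(a₂ t)) 0 * ub t)) (Set.Ici t₀) t ∧
    HasDerivWithinAt lb
      (max χ 0 * lb t * (lb t - ub t) +
        lb t * (a₀ t - a₁ t * lb t - κ * max (a₂ t) 0 * ub t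
          + κ * max (-(a₂ t)) 0 * lb t)) (Set.Ici t₀) t

open Set Filter Real

section LinearODE

variable {f c : ℝ → ℝ} {a : ℝ}

/-- Where `f` touches the barrier `β exp (μ (x - a))`, `f' = c f` beats the barrier's slope. -/
theorem exp_mul_le_of_hasDerivWithinAt_mul {b K β μ : ℝ} (hf : ContinuousOn f (Icc a b))
    (hf' : ∀ x ∈ Ico a b, HasDerivWithinAt f (c x * f x) (Ici x) x)
    (hc : ∀ x ∈ Ico a b, |c x| ≤ K) (hβ : β ≤ f a) (hμ : μ * β < -(K * |β|)) :
    ∀ x ∈ Icc a b, β * exp (μ * (x - a)) ≤ f x := by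
  have hB : ∀ x, HasDerivAt (fun x => -(β * exp (μ * (x - a))))
      (-(β * (exp (μ * (x - a)) * (μ * 1)))) x := fun x =>
    ((((hasDerivAt_id x).sub_const a).const_mul μ).exp.const_mul β).neg
  intro x hx
  refine neg_le_neg_iff.1 <| image_le_of_deriv_right_lt_deriv_boundary hf.neg
    (fun y hy => (hf' y hy).neg) (by simpa using hβ) hB (fun y hy hfy => ?_) hx
  have hcβ : μ * β < c y * β := by
    have := mul_le_mul_of_nonneg_right (hc y hy) (abs_nonneg β)
    linarith [neg_abs_le (c y * β), abs_mul (c y) β]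
  have := mul_lt_mul_of_pos_right hcβ (exp_pos (μ * (y - a)))
  rw [neg_inj.1 hfy]
  linarith

theorem exists_forall_exp_mul_le_of_hasDerivWithinAt_mul (hc : ContinuousOn c (Ici a))
    (hf : ∀ x ∈ Ici a, HasDerivWithinAt f (c x * f x) (Ici a) x) {x : ℝ} (hx : a ≤ x) :
    ∃ K, ∀ β μ, β ≤ f a → μ * β < -(K * |β|) → β * exp (μ * (x - a)) ≤ f x := by
  obtain ⟨K, hK⟩ := isCompact_Icc.exists_bound_of_continuousOn (hc.mono Icc_subset_Ici_self)
  refine ⟨K, fun β μ hβ hμ => exp_mul_le_of_hasDerivWithinAt_mul (b := x)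
    (fun y hy => (hf y hy.1).continuousWithinAt.mono Icc_subset_Ici_self)
    (fun y hy => (hf y hy.1).mono (Ici_subset_Ici.2 hy.1))
    (fun y hy => hK y (Ico_subset_Icc_self hy)) hβ hμ x ⟨hx, le_rfl⟩⟩

theorem pos_of_hasDerivWithinAt_mul (hc : ContinuousOn c (Ici a))
    (hf : ∀ x ∈ Ici a, HasDerivWithinAt f (c x * f x) (Ici a) x) (ha : 0 < f a) :
    ∀ x ∈ Ici a, 0 < f x := by
  intro x hx
  obtain ⟨K, hK⟩ := exists_forall_exp_mul_le_of_hasDerivWithinAt_mul hc hf hx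
  have hμ : -(K + 1) * f a < -(K * |f a|) := by rw [abs_of_pos ha]; linarith
  exact (mul_pos ha (exp_pos _)).trans_le (hK _ _ le_rfl hμ)

theorem nonneg_of_hasDerivWithinAt_mul (hc : ContinuousOn c (Ici a))
    (hf : ∀ x ∈ Ici a, HasDerivWithinAt f (c x * f x) (Ici a) x) (ha : 0 ≤ f a) :
    ∀ x ∈ Ici a, 0 ≤ f x := by
  intro x hx
  obtain ⟨K, hK⟩ := exists_forall_exp_mul_le_of_hasDerivWithinAt_mul hc hf hx
  by_contra! hfx
  have he := exp_pos ((K + 1) * (x - a))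
  have hβ : f x / (2 * exp ((K + 1) * (x - a))) < 0 := div_neg_of_neg_of_pos hfx (by positivity)
  have := hK _ (K + 1) (hβ.le.trans ha) (by rw [abs_of_neg hβ]; linarith)
  rw [div_mul_eq_div_div, div_mul_cancel₀ _ he.ne'] at this
  linarith

end LinearODE
/-- In Mathlib, `⨅` of a real family that is not bounded below is `0`. -/
theorem bddBelow_range_of_iInf_pos {ι : Sort*} {f : ι → ℝ} (h : 0 < ⨅ i, f i) :
    BddBelow (range f) := by
  by_contra hf
  rw [Real.iInf_of_not_bddBelow hf] at h
  exact h.false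

theorem iInf_sub_pos_of_lt_iInf {ι : Sort*} [Nonempty ι] {f : ι → ℝ} {r : ℝ} (hr : 0 ≤ r)
    (h : r < ⨅ i, f i) : 0 < ⨅ i, (f i - r) ∧ BddBelow (range fun i => f i - r) := by
  obtain ⟨b, hb⟩ := bddBelow_range_of_iInf_pos (hr.trans_lt h)
  refine ⟨(sub_pos.2 h).trans_le (le_ciInf fun i => sub_le_sub_right ?_ r), b - r, ?_⟩
  · exact ciInf_le ⟨b, hb⟩ i
  · rintro _ ⟨i, rfl⟩
    exact sub_le_sub_right (hb ⟨i, rfl⟩) r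

theorem mul_log_div_le_sub {x y : ℝ} (hx : 0 < x) (hy : 0 < y) : y * log (x / y) ≤ x - y := by
  have := mul_le_mul_of_nonneg_left (log_le_sub_one_of_pos (div_pos hx hy)) hy.le
  rwa [mul_sub, mul_div_cancel₀ _ hy.ne', mul_one] at this

theorem sub_le_mul_log_div {x y : ℝ} (hx : 0 < x) (hy : 0 < y) : x - y ≤ x * log (x / y) := by
  have := mul_le_mul_of_nonneg_left (one_sub_inv_le_log_of_pos (div_pos hx hy)) hx.le
  rwa [inv_div, mul_sub, mul_div_cancel₀ _ hx.ne', mul_one] at this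

theorem antitoneOn_of_hasDerivWithinAt_log_nonpos {g g' : ℝ → ℝ} {a : ℝ}
    (hg : ∀ t ∈ Ici a, 0 < g t)
    (hd : ∀ t ∈ Ici a, HasDerivWithinAt (fun s => log (g s)) (g' t) (Ici a) t)
    (hg' : ∀ t ∈ Ici a, g' t ≤ 0) : AntitoneOn g (Ici a) := by
  have hlog : AntitoneOn (fun s => log (g s)) (Ici a) := by
    refine antitoneOn_of_hasDerivWithinAt_nonpos (f' := g') (convex_Ici a)
      (fun t ht => (hd t ht).continuousWithinAt) (fun t ht => ?_) (fun t ht => ?_)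
    · rw [interior_Ici] at ht ⊢
      exact (hd t (Ioi_subset_Ici_self ht)).mono Ioi_subset_Ici_self
    · exact hg' t (interior_subset ht)
  exact fun s hs t ht hst => (log_le_log_iff (hg t ht) (hg s hs)).1 (hlog hs ht hst)

theorem tendsto_sub_of_log_div_le {u v : ℝ → ℝ} {a M C ε : ℝ} (hε : 0 < ε)
    (hv : ∀ t ∈ Ici a, 0 < v t) (hvu : ∀ t ∈ Ici a, v t ≤ u t) (hu : ∀ t ∈ Ici a, u t ≤ M)
    (hlog : ∀ t ∈ Ici a, log (u t / v t) ≤ exp (-(ε * (t - a))) * C) :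
    Tendsto (fun t => u t - v t) atTop (nhds 0) := by
  have hexp : Tendsto (fun t => exp (-(ε * (t - a)))) atTop (nhds 0) :=
    tendsto_exp_atBot.comp <| tendsto_neg_atTop_atBot.comp <|
      (tendsto_atTop_add_const_right _ (-a) tendsto_id).const_mul_atTop hε
  have hbound : Tendsto (fun t => M * (exp (-(ε * (t - a))) * C)) atTop (nhds 0) := by
    simpa using (hexp.mul_const C).const_mul M
  refine tendsto_of_tendsto_of_tendsto_of_le_of_le' tendsto_const_nhds hbound ?_ ?_ <;>
    filter_upwards [eventually_ge_atTop a] with t ht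
  · exact sub_nonneg.2 (hvu t ht)
  · have hu₀ := (hv t ht).trans_le (hvu t ht)
    have hL := log_nonneg ((one_le_div (hv t ht)).2 (hvu t ht))
    calc u t - v t ≤ u t * log (u t / v t) := sub_le_mul_log_div hu₀ (hv t ht)
      _ ≤ M * log (u t / v t) := mul_le_mul_of_nonneg_right (hu t ht) hL
      _ ≤ M * (exp (-(ε * (t - a))) * C) :=
        mul_le_mul_of_nonneg_left (hlog t ht) (hu₀.le.trans (hu t ht))

theorem le_exp_mul_of_hasDerivWithinAt_le {L L' : ℝ → ℝ} {a ε : ℝ}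
    (hL : ∀ t ∈ Ici a, HasDerivWithinAt L (L' t) (Ici a) t)
    (hbound : ∀ t ∈ Ici a, L' t ≤ -ε * L t) :
    ∀ t ∈ Ici a, L t ≤ exp (-(ε * (t - a))) * L a := by
  intro t ht
  have := le_gronwallBound_of_liminf_deriv_right_le (b := t) (K := -ε) (ε := 0)
    (fun y hy => (hL y hy.1).continuousWithinAt.mono Icc_subset_Ici_self)
    (fun y hy _ hr => ((hL y hy.1).mono (Ici_subset_Ici.2 hy.1)).liminf_right_slope_le hr)
    le_rfl (fun y hy => by simpa using hbound y hy.1) t ⟨ht, le_rfl⟩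
  rwa [gronwallBound_ε0, mul_comm, neg_mul] at this

namespace CompODESystemOn

variable {χ κ : ℝ} {a₀ a₁ a₂ : ℝ → ℝ} {t₀ : ℝ} {ub lb : ℝ → ℝ}

theorem continuousOn_ub (hsol : CompODESystemOn χ κ a₀ a₁ a₂ t₀ ub lb) :
    ContinuousOn ub (Ici t₀) :=
  fun t ht => (hsol t ht).1.continuousWithinAt

theorem continuousOn_lb (hsol : CompODESystemOn χ κ a₀ a₁ a₂ t₀ ub lb) :
    ContinuousOn lb (Ici t₀) :=
  fun t ht => (hsol t ht).2.continuousWithinAt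

theorem lb_pos (hsol : CompODESystemOn χ κ a₀ a₁ a₂ t₀ ub lb) (h₀ : Continuous a₀)
    (h₁ : Continuous a₁) (h₂ : Continuous a₂) (hlb₀ : 0 < lb t₀) : ∀ t ∈ Ici t₀, 0 < lb t := by
  have := hsol.continuousOn_ub
  have := hsol.continuousOn_lb
  exact pos_of_hasDerivWithinAt_mul (c := fun t => max χ 0 * (lb t - ub t) + (a₀ t - a₁ t * lb t
    - κ * max (a₂ t) 0 * ub t + κ * max (-(a₂ t)) 0 * lb t)) (by fun_prop)
    (fun t ht => (hsol t ht).2.congr_deriv (by ring)) hlb₀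

theorem lb_le_ub (hsol : CompODESystemOn χ κ a₀ a₁ a₂ t₀ ub lb) (h₀ : Continuous a₀)
    (h₁ : Continuous a₁) (h₂ : Continuous a₂) (hord₀ : lb t₀ ≤ ub t₀) :
    ∀ t ∈ Ici t₀, lb t ≤ ub t := by
  have := hsol.continuousOn_ub
  have := hsol.continuousOn_lb
  have := nonneg_of_hasDerivWithinAt_mul (f := fun t => ub t - lb t)
    (c := fun t => (max χ 0 - a₁ t + κ * max (-(a₂ t)) 0) * (ub t + lb t) + a₀ t) (by fun_prop)
    (fun t ht => ((hsol t ht).1.sub (hsol t ht).2).congr_deriv (by ring)) (sub_nonneg.2 hord₀)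
  exact fun t ht => sub_nonneg.1 (this t ht)

theorem hasDerivWithinAt_log_div (hsol : CompODESystemOn χ κ a₀ a₁ a₂ t₀ ub lb) {t : ℝ}
    (ht : t ∈ Ici t₀) (hub : ub t ≠ 0) (hlb : lb t ≠ 0) :
    HasDerivWithinAt (fun s => log (ub s / lb s))
      (-((a₁ t - κ * |a₂ t| - 2 * max χ 0) * (ub t - lb t))) (Ici t₀) t := by
  convert ((hsol t ht).1.div (hsol t ht).2 hlb).log (div_ne_zero hub hlb) using 1
  · rfl
  simp only [Pi.div_apply]
  field_simp
  rw [← max_zero_add_max_neg_zero_eq_abs_self (a₂ t)]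
  ring

theorem antitoneOn_div (hsol : CompODESystemOn χ κ a₀ a₁ a₂ t₀ ub lb)
    (hrate : ∀ t, 0 ≤ a₁ t - κ * |a₂ t| - 2 * max χ 0) (hlb : ∀ t ∈ Ici t₀, 0 < lb t)
    (hle : ∀ t ∈ Ici t₀, lb t ≤ ub t) : AntitoneOn (fun t => ub t / lb t) (Ici t₀) := by
  have hub : ∀ t ∈ Ici t₀, 0 < ub t := fun t ht => (hlb t ht).trans_le (hle t ht)
  exact antitoneOn_of_hasDerivWithinAt_log_nonpos (fun t ht => div_pos (hub t ht) (hlb t ht))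
    (fun t ht => hsol.hasDerivWithinAt_log_div ht (hub t ht).ne' (hlb t ht).ne')
    (fun t ht => neg_nonpos.2 (mul_nonneg (hrate t) (sub_nonneg.2 (hle t ht))))

theorem ub_le_max (hsol : CompODESystemOn χ κ a₀ a₁ a₂ t₀ ub lb) (hκ : 0 ≤ κ) {A ι : ℝ}
    (hA : ∀ t, a₀ t ≤ A) (hι0 : 0 < ι) (hι : ∀ t, ι ≤ a₁ t - κ * |a₂ t| - 2 * max χ 0)
    (hlb : ∀ t ∈ Ici t₀, 0 < lb t) (hle : ∀ t ∈ Ici t₀, lb t ≤ ub t) :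
    ∀ t ∈ Ici t₀, ub t ≤ max (ub t₀) (A / ι + 1) := by
  intro t ht
  refine image_le_of_deriv_right_lt_deriv_boundary (B := fun _ => max (ub t₀) (A / ι + 1))
    (B' := 0) (hsol.continuousOn_ub.mono Icc_subset_Ici_self)
    (fun x hx => (hsol x hx.1).1.mono (Ici_subset_Ici.2 hx.1)) (le_max_left _ _)
    (fun _ => hasDerivAt_const _ _) (fun x hx hux => ?_) ⟨ht, le_rfl⟩
  have hlbx := hlb x hx.1
  have hubx := hlbx.trans_le (hle x hx.1)
  have hχ : 0 ≤ max χ 0 := le_max_right χ 0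
  have hneg : κ * max (-(a₂ x)) 0 ≤ κ * |a₂ x| :=
    mul_le_mul_of_nonneg_left (max_le (neg_le_abs _) (abs_nonneg _)) hκ
  have hA_lt : A < ι * ub x := by
    rw [mul_comm, ← div_lt_iff₀ hι0]
    linarith [le_max_right (ub t₀) (A / ι + 1)]
  -- logistic comparison: `ū' ≤ ū (A - ι ū)`
  have hinner : max χ 0 * (ub x - lb x) + (a₀ x - a₁ x * ub x - κ * max (a₂ x) 0 * lb x
      + κ * max (-(a₂ x)) 0 * ub x) ≤ A - ι * ub x := by
    have h1 := mul_le_mul_of_nonneg_left (sub_le_self (ub x) hlbx.le) hχ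
    have h2 : 0 ≤ κ * max (a₂ x) 0 * lb x := by positivity
    have h3 := mul_le_mul_of_nonneg_right ((hι x).trans (by linarith :
      a₁ x - κ * |a₂ x| - 2 * max χ 0 ≤ a₁ x - κ * max (-(a₂ x)) 0 - max χ 0)) hubx.le
    linarith [hA x]
  have := mul_neg_of_pos_of_neg hubx (hinner.trans_lt (sub_neg.2 hA_lt))
  simp only [Pi.zero_apply]
  linarith

theorem log_div_le_exp_mul (hsol : CompODESystemOn χ κ a₀ a₁ a₂ t₀ ub lb) {ι m : ℝ}
    (hι0 : 0 < ι) (hι : ∀ t, ι ≤ a₁ t - κ * |a₂ t| - 2 * max χ 0)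
    (hlb : ∀ t ∈ Ici t₀, 0 < lb t) (hle : ∀ t ∈ Ici t₀, lb t ≤ ub t)
    (hm : ∀ t ∈ Ici t₀, m ≤ ub t) :
    ∀ t ∈ Ici t₀, log (ub t / lb t) ≤
      exp (-(ι * m * (lb t₀ / ub t₀) * (t - t₀))) * log (ub t₀ / lb t₀) := by
  have hub : ∀ t ∈ Ici t₀, 0 < ub t := fun t ht => (hlb t ht).trans_le (hle t ht)
  have hanti := hsol.antitoneOn_div (fun t => hι0.le.trans (hι t)) hlb hle
  refine le_exp_mul_of_hasDerivWithinAt_le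
    (fun t ht => hsol.hasDerivWithinAt_log_div ht (hub t ht).ne' (hlb t ht).ne') fun t ht => ?_
  have hL := log_nonneg ((one_le_div (hlb t ht)).2 (hle t ht))
  have hlb_ge : m * (lb t₀ / ub t₀) ≤ lb t := by
    have h := hanti self_mem_Ici ht ht
    rw [div_le_div_iff₀ (hlb t ht) (hlb t₀ self_mem_Ici)] at h
    rw [← mul_div_assoc, div_le_iff₀ (hub t₀ self_mem_Ici)]
    linarith [mul_le_mul_of_nonneg_right (hm t ht) (hlb t₀ self_mem_Ici).le]
  have h1 := mul_le_mul_of_nonneg_left (mul_le_mul_of_nonneg_right hlb_ge hL) hι0.le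
  have h2 := mul_le_mul_of_nonneg_left (mul_log_div_le_sub (hub t ht) (hlb t ht)) hι0.le
  have h3 := mul_le_mul_of_nonneg_right (hι t) (sub_nonneg.2 (hle t ht))
  linarith

end CompODESystemOn

theorem comparison_system_contraction_of_ratio_general
    (χ κ : ℝ) (hκ : 0 < κ)
    (a₀ a₁ a₂ : ℝ → ℝ)
    (h₀ : ContBdd a₀) (h₁ : ContBdd a₁) (h₂ : ContBdd a₂)
    (hcond : 2 * max χ 0 < ⨅ t, (a₁ t - κ * |a₂ t|))
    (t₀ : ℝ) (ub lb : ℝ → ℝ)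
    (hsol : CompODESystemOn χ κ a₀ a₁ a₂ t₀ ub lb)
    (hlb₀ : 0 < lb t₀) (hord₀ : lb t₀ ≤ ub t₀)
    (m ε₀ : ℝ) (hm : m = ⨅ t : Set.Ici t₀, ub ↑t)
    (hε₀ : ε₀ = (⨅ t, (a₁ t - κ * |a₂ t| - 2 * max χ 0)) * m * (lb t₀ / ub t₀)) :
    (∀ t ∈ Set.Ici t₀,
      HasDerivWithinAt (fun s => Real.log (ub s / lb s))
        (-((a₁ t - κ * |a₂ t| - 2 * max χ 0) * (ub t - lb t))) (Set.Ici t₀) t ∧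
      -((a₁ t - κ * |a₂ t| - 2 * max χ 0) * (ub t - lb t)) ≤ 0) ∧
    AntitoneOn (fun t => ub t / lb t) (Set.Ici t₀) ∧
    (∀ t ∈ Set.Ici t₀, ub t / lb t ≤ ub t₀ / lb t₀) ∧
    (0 < m →
      0 < ε₀ ∧
      (∀ t ∈ Set.Ici t₀,
        0 ≤ Real.log (ub t / lb t) ∧
        Real.log (ub t / lb t) ≤ Real.exp (-(ε₀ * (t - t₀))) * Real.log (ub t₀ / lb t₀)) ∧
      Filter.Tendsto (fun t => ub t - lb t) Filter.atTop (nhds 0)) := by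
  obtain ⟨hι0, hιbdd⟩ := iInf_sub_pos_of_lt_iInf (by positivity) hcond
  have hι := fun t => ciInf_le hιbdd t
  have hlb := hsol.lb_pos h₀.1 h₁.1 h₂.1 hlb₀
  have hle := hsol.lb_le_ub h₀.1 h₁.1 h₂.1 hord₀
  have hub : ∀ t ∈ Ici t₀, 0 < ub t := fun t ht => (hlb t ht).trans_le (hle t ht)
  have hanti := hsol.antitoneOn_div (fun t => hι0.le.trans (hι t)) hlb hle
  refine ⟨fun t ht => ⟨hsol.hasDerivWithinAt_log_div ht (hub t ht).ne' (hlb t ht).ne',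
    neg_nonpos.2 (mul_nonneg (hι0.le.trans (hι t)) (sub_nonneg.2 (hle t ht)))⟩,
    hanti, fun t ht => hanti self_mem_Ici ht ht, fun hm0 => ?_⟩
  have hmle : ∀ t ∈ Ici t₀, m ≤ ub t := fun t ht =>
    hm ▸ ciInf_le ⟨0, by rintro _ ⟨s, rfl⟩; exact (hub s s.2).le⟩ (⟨t, ht⟩ : Ici t₀)
  have hdecay := hsol.log_div_le_exp_mul hι0 hι hlb hle hmle
  rw [← hε₀] at hdecay
  have hε₀pos : 0 < ε₀ := hε₀ ▸ mul_pos (mul_pos hι0 hm0) (div_pos hlb₀ (hub t₀ self_mem_Ici))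
  obtain ⟨A, hA⟩ := h₀.2.1
  refine ⟨hε₀pos, fun t ht => ⟨log_nonneg ((one_le_div (hlb t ht)).2 (hle t ht)), hdecay t ht⟩,
    tendsto_sub_of_log_div_le hε₀pos hlb hle (hsol.ub_le_max hκ.le (fun t => hA ⟨t, rfl⟩) hι0 hι
      hlb hle) hdecay⟩

/-- under `inf_t {a₁(t) − κ|a₂(t)|} > 2(χ)₊`, for a solution `(ū, u̲)` of the
comparison ODE system with `0 < u̲(t₀) ≤ ū(t₀)`:
(i) `ln(ū/u̲)` has derivative `−(a₁(t) − κ|a₂(t)| − 2(χ)₊)(ū(t) − u̲(t)) ≤ 0`, so `ū/u̲` is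
nonincreasing and bounded by its initial value;
(ii) if `m = inf_{t ≥ t₀} ū(t) > 0` then, with
`ε₀ = (inf_t {a₁(t) − κ|a₂(t)| − 2(χ)₊}) · m · u̲(t₀)/ū(t₀) > 0`,
`0 ≤ ln(ū(t)/u̲(t)) ≤ e^{−ε₀(t − t₀)} ln(ū(t₀)/u̲(t₀))` for all `t ≥ t₀`, and
`ū(t) − u̲(t) → 0` as `t → ∞`. -/
theorem comparison_system_contraction_of_ratio
    (χ κ : ℝ) (hκ : 0 < κ)
    (a₀ a₁ a₂ : ℝ → ℝ)
    (h₀ : ContBdd a₀) (h₁ : ContBdd a₁) (h₂ : ContBdd a₂)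
    (h₀pos : 0 < ⨅ t, a₀ t) (h₁nonneg : ∀ t, 0 ≤ a₁ t)
    (hcond : 2 * max χ 0 < ⨅ t, (a₁ t - κ * |a₂ t|))
    (t₀ : ℝ) (ub lb : ℝ → ℝ)
    (hsol : CompODESystemOn χ κ a₀ a₁ a₂ t₀ ub lb)
    (hlb₀ : 0 < lb t₀) (hord₀ : lb t₀ ≤ ub t₀)
    (m ε₀ : ℝ) (hm : m = ⨅ t : Set.Ici t₀, ub ↑t)
    (hε₀ : ε₀ = (⨅ t, (a₁ t - κ * |a₂ t| - 2 * max χ 0)) * m * (lb t₀ / ub t₀)) :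
    (∀ t ∈ Set.Ici t₀,
      HasDerivWithinAt (fun s => Real.log (ub s / lb s))
        (-((a₁ t - κ * |a₂ t| - 2 * max χ 0) * (ub t - lb t))) (Set.Ici t₀) t ∧
      -((a₁ t - κ * |a₂ t| - 2 * max χ 0) * (ub t - lb t)) ≤ 0) ∧
    AntitoneOn (fun t => ub t / lb t) (Set.Ici t₀) ∧
    (∀ t ∈ Set.Ici t₀, ub t / lb t ≤ ub t₀ / lb t₀) ∧
    (0 < m →
      0 < ε₀ ∧
      (∀ t ∈ Set.Ici t₀,
        0 ≤ Real.log (ub t / lb t) ∧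
        Real.log (ub t / lb t) ≤ Real.exp (-(ε₀ * (t - t₀))) * Real.log (ub t₀ / lb t₀)) ∧
      Filter.Tendsto (fun t => ub t - lb t) Filter.atTop (nhds 0)) :=
  comparison_system_contraction_of_ratio_general χ κ hκ a₀ a₁ a₂ h₀ h₁ h₂ hcond t₀ ub lb hsol hlb₀
    hord₀ m ε₀ hm hε₀
end

section
/- A continuous function g : ℝ × K → ℝ is almost periodic in t uniformly with respect to x ∈ K if and only if g is uniformly continuous on ℝ × K and for any two sequences {β'_n}, {γ'_n} ⊂ ℝ there exist subsequences {β_n} of {β'_n} and {γ_n} of {γ'_n} (extracted with the same indices) such that for every (t, x) ∈ ℝ × K the iterated limit lim_{n→∞} lim_{m→∞} g(t + β_n + γ_m, x) and the diagonal limit lim_{n→∞} g(t + β_n + γ_n, x) both exist and are equal. -/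
/-!
Forward direction: translates of an almost periodic function form a totally bounded set for the
sup norm (cover a period window `[0, l]` by compactness and shift by an `ε`-period), so every
sequence of shifts has a subsequence along which the translates are uniformly Cauchy. A diagonal
extraction handles a countable dense subset of `K` at once, and uniform continuity of `g` in `x`
spreads the uniform Cauchy property to all of `K`. Extracting first for `γ'` and then for
`β' + γ'`, the inner limit is `G (t + β n)` with `G` the uniform limit of the `γ'`-translates,
and uniformity makes it asymptotic to the diagonal term `g (t + β n + γ n)`.

Converse: with `β' = 0` the criterion gives pointwise limits of translates. If the convergence
were not uniform, feeding the criterion the bad points `tⱼ` as `β'` makes the iterated limit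
`lim F (tⱼ)` differ from the diagonal limit. Finally, if the `ε`-periods were not relatively
dense one could choose shifts `s` no difference `s j - s i` of which is an `ε`-period, which no
uniformly Cauchy subsequence of translates allows.
-/

/-- A continuous function `f : ℝ → ℝ` is (Bohr) almost periodic: for every `ε > 0` the set of
`ε`-periods of `f` is relatively dense in `ℝ`. -/
def BohrAlmostPeriodic (f : ℝ → ℝ) : Prop :=
  Continuous f ∧
    ∀ ε > 0, ∃ l > 0, ∀ s : ℝ, ∃ τ ∈ Set.Icc s (s + l), ∀ t : ℝ, |f (t + τ) - f t| < ε

/-- `g(t,x)` is almost periodic in `t` uniformly with respect to `x ∈ K`: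
`g` is uniformly continuous on `ℝ × K` and, for each `x ∈ K`, `t ↦ g(t,x)` is almost
periodic. -/
def AlmostPeriodicUniformlyIn {n : ℕ} (g : ℝ → EuclideanSpace ℝ (Fin n) → ℝ)
    (K : Set (EuclideanSpace ℝ (Fin n))) : Prop :=
  UniformContinuousOn (fun p : ℝ × EuclideanSpace ℝ (Fin n) => g p.1 p.2)
      (Set.univ ×ˢ K) ∧
    ∀ x ∈ K, BohrAlmostPeriodic fun t => g t x

open Filter Topology Metric Set TopologicalSpace BoundedContinuousFunction Uniformity

theorem UniformCauchySeqOn.comp_tendsto {ι κ α β : Type*} [UniformSpace β] {F : ι → α → β}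
    {p : Filter ι} {s : Set α} (hF : UniformCauchySeqOn F p s) {q : Filter κ} {φ : κ → ι}
    (hφ : Tendsto φ q p) : UniformCauchySeqOn (fun k => F (φ k)) q s :=
  fun u hu => (hφ.prodMap hφ).eventually (hF u hu)

theorem BoundedContinuousFunction.uniformCauchySeqOn_of_cauchySeq {α β : Type*}
    [TopologicalSpace α] [PseudoMetricSpace β] {F : ℕ → α →ᵇ β} (hF : CauchySeq F) :
    UniformCauchySeqOn (fun k => ⇑(F k)) atTop univ := by
  rw [Metric.uniformCauchySeqOn_iff]
  intro ε hε
  obtain ⟨N, hN⟩ := Metric.cauchySeq_iff.1 hF ε hε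
  exact ⟨N, fun m hm n hn x _ => (dist_coe_le_dist x).trans_lt (hN m hm n hn)⟩

theorem exists_strictMono_forall_cauchySeq {ι E : Type*} [Countable ι] [PseudoMetricSpace E]
    [CompleteSpace E] (x : ι → ℕ → E) (hx : ∀ i, TotallyBounded (range (x i))) :
    ∃ φ : ℕ → ℕ, StrictMono φ ∧ ∀ i, CauchySeq (x i ∘ φ) := by
  have hcpt : IsCompact (univ.pi fun i => closure (range (x i))) :=
    isCompact_univ_pi fun i => (hx i).closure.isCompact_of_isClosed isClosed_closure
  obtain ⟨y, -, φ, hφ, hy⟩ := hcpt.tendsto_subseq (x := fun k i => x i k)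
    fun k => mem_univ_pi.2 fun i => subset_closure (mem_range_self k)
  exact ⟨φ, hφ, fun i => (tendsto_pi_nhds.1 hy i).cauchySeq⟩

theorem exists_seq_sub_notMem_of_not_relativelyDense {P : Set ℝ}
    (hP : ¬ ∃ l > 0, ∀ a, ∃ τ ∈ Icc a (a + l), τ ∈ P) :
    ∃ s : ℕ → ℝ, ∀ i j, i < j → s j - s i ∉ P := by
  push Not at hP
  obtain ⟨s, -, hs⟩ := exists_seq_of_forall_finset_exists (fun _ : ℝ => True)
    (fun x y => y - x ∉ P) fun S _ => by
      obtain ⟨a, ha⟩ := hP (2 * ∑ x ∈ S, |x| + 1) (by positivity)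
      refine ⟨a + ∑ x ∈ S, |x|, trivial, fun x hx => ha _ ?_⟩
      have := abs_le.1 (Finset.single_le_sum (fun y _ => abs_nonneg y) hx)
      constructor <;> linarith [this.1, this.2]
  exact ⟨s, hs⟩

theorem uniformContinuous_section {X : Type*} [UniformSpace X] {K : Set X} {g : ℝ → X → ℝ}
    (hg : UniformContinuousOn (fun p : ℝ × X => g p.1 p.2) (univ ×ˢ K)) {x : X} (hx : x ∈ K) :
    UniformContinuous fun t => g t x := by
  rw [← uniformContinuousOn_univ]
  exact hg.comp (uniformContinuous_id.prodMk uniformContinuous_const).uniformContinuousOn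
    fun _ _ => ⟨trivial, hx⟩

namespace BohrAlmostPeriodic

variable {f : ℝ → ℝ}

theorem exists_abs_le (hf : BohrAlmostPeriodic f) : ∃ C, ∀ t, |f t| ≤ C := by
  obtain ⟨l, -, hl⟩ := hf.2 1 one_pos
  obtain ⟨C, hC⟩ := (isCompact_Icc (a := 0) (b := l)).exists_bound_of_continuousOn
    hf.1.continuousOn
  refine ⟨C + 1, fun t => ?_⟩
  obtain ⟨τ, hτ, hτ1⟩ := hl (-t)
  have hbound := hC (t + τ) ⟨by linarith [hτ.1], by linarith [hτ.2]⟩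
  rw [Real.norm_eq_abs] at hbound
  linarith [abs_sub_abs_le_abs_sub (f t) (f (t + τ)), abs_sub_comm (f t) (f (t + τ)), hτ1 t]

theorem exists_boundedContinuousFunction (hf : BohrAlmostPeriodic f) : ∃ F : ℝ →ᵇ ℝ, ⇑F = f :=
  let ⟨C, hC⟩ := hf.exists_abs_le
  ⟨.ofNormedAddCommGroup f hf.1 C hC, rfl⟩

end BohrAlmostPeriodic

theorem totallyBounded_range_translate {F : ℝ →ᵇ ℝ} (hUC : UniformContinuous F)
    (hap : BohrAlmostPeriodic F) :
    TotallyBounded (range fun u => F.compContinuous (.addRight u)) := by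
  set T := fun u => F.compContinuous (.addRight u)
  have hT : Continuous T := by
    refine (Metric.uniformContinuous_iff.2 fun ε hε => ?_).continuous
    obtain ⟨δ, hδ, hF⟩ := Metric.uniformContinuous_iff.1 hUC (ε / 2) (half_pos hε)
    refine ⟨δ, hδ, fun {u v} huv => ((dist_le (half_pos hε).le).2 fun t => ?_).trans_lt
      (half_lt_self hε)⟩
    simpa [T] using (hF (by simpa using huv : dist (t + u) (t + v) < δ)).le
  rw [Metric.totallyBounded_iff]
  intro ε hε
  obtain ⟨l, -, hl⟩ := hap.2 (ε / 2) (half_pos hε)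
  obtain ⟨c, hc, hcover⟩ := Metric.totallyBounded_iff.1
    ((isCompact_Icc (a := 0) (b := l)).image hT).totallyBounded (ε / 2) (half_pos hε)
  refine ⟨c, hc, ?_⟩
  rintro _ ⟨u, rfl⟩
  obtain ⟨τ, hτ, hτε⟩ := hl (-u)
  have hperiod : dist (T u) (T (u + τ)) ≤ ε / 2 := (dist_le (half_pos hε).le).2 fun t => by
    simpa [T, Real.dist_eq, abs_sub_comm, add_assoc] using (hτε (t + u)).le
  obtain ⟨z, hz, hzu⟩ := mem_iUnion₂.1
    (hcover ⟨u + τ, ⟨by linarith [hτ.1], by linarith [hτ.2]⟩, rfl⟩)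
  exact mem_iUnion₂.2 ⟨z, hz, (dist_triangle _ _ _).trans_lt (by linarith [mem_ball.1 hzu])⟩

section Translates

variable {X : Type*} [PseudoMetricSpace X] {K : Set X} {g : ℝ → X → ℝ}

theorem uniformCauchySeqOn_translate_of_dense
    (hg : UniformContinuousOn (fun p : ℝ × X => g p.1 p.2) (univ ×ˢ K)) {D : Set X}
    (hDK : D ⊆ K) (hKD : K ⊆ closure D) {s : ℕ → ℝ}
    (hD : ∀ d ∈ D, UniformCauchySeqOn (fun k t => g (t + s k) d) atTop univ) {x : X}
    (hx : x ∈ K) : UniformCauchySeqOn (fun k t => g (t + s k) x) atTop univ := by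
  rw [Metric.uniformCauchySeqOn_iff]
  intro ε hε
  obtain ⟨δ, hδ, hgδ⟩ := Metric.uniformContinuousOn_iff.1 hg (ε / 3) (by positivity)
  obtain ⟨d, hdD, hxd⟩ := Metric.mem_closure_iff.1 (hKD hx) δ hδ
  have hnear : ∀ t, dist (g t x) (g t d) < ε / 3 := fun t =>
    hgδ (t, x) ⟨trivial, hx⟩ (t, d) ⟨trivial, hDK hdD⟩ (by simpa [Prod.dist_eq] using hxd)
  obtain ⟨N, hN⟩ := Metric.uniformCauchySeqOn_iff.1 (hD d hdD) (ε / 3) (by positivity)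
  refine ⟨N, fun m hm n hn t _ => ?_⟩
  calc dist (g (t + s m) x) (g (t + s n) x)
      ≤ dist (g (t + s m) x) (g (t + s m) d) + dist (g (t + s m) d) (g (t + s n) d) +
          dist (g (t + s n) d) (g (t + s n) x) := dist_triangle4 _ _ _ _
    _ < ε / 3 + ε / 3 + ε / 3 := by
        gcongr
        · exact hnear _
        · exact hN m hm n hn t trivial
        · rw [dist_comm]; exact hnear _
    _ = ε := by ring

theorem exists_strictMono_uniformCauchySeqOn_translate (hK : IsSeparable K)
    (hg : UniformContinuousOn (fun p : ℝ × X => g p.1 p.2) (univ ×ˢ K))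
    (hap : ∀ x ∈ K, BohrAlmostPeriodic fun t => g t x) (s : ℕ → ℝ) :
    ∃ φ : ℕ → ℕ, StrictMono φ ∧
      ∀ x ∈ K, UniformCauchySeqOn (fun k t => g (t + s (φ k)) x) atTop univ := by
  obtain ⟨D, hDK, hDc, hKD⟩ := hK.exists_countable_dense_subset
  have := hDc.to_subtype
  choose F hF using fun d : D => (hap d (hDK d.2)).exists_boundedContinuousFunction
  have hFtb (d : D) : TotallyBounded (range fun u => (F d).compContinuous (.addRight u)) := by
    apply totallyBounded_range_translate <;> rw [hF d]
    exacts [uniformContinuous_section hg (hDK d.2), hap d (hDK d.2)]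
  obtain ⟨φ, hφ, hcauchy⟩ := exists_strictMono_forall_cauchySeq
    (fun d k => (F d).compContinuous (.addRight (s k)))
    fun d => (hFtb d).subset (range_comp_subset_range s fun u => (F d).compContinuous (.addRight u))
  refine ⟨φ, hφ, fun x hx => uniformCauchySeqOn_translate_of_dense hg hDK hKD
    (fun d hd => ?_) hx⟩
  simpa [hF, Function.comp_def] using uniformCauchySeqOn_of_cauchySeq (hcauchy ⟨d, hd⟩)

end Translates

theorem exists_iterated_limit_eq_diagonal_limit {f : ℝ → ℝ} {β γ : ℕ → ℝ}
    (hγ : UniformCauchySeqOn (fun k t => f (t + γ k)) atTop univ)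
    (hβγ : UniformCauchySeqOn (fun k t => f (t + (β k + γ k))) atTop univ) (t : ℝ) :
    ∃ (h : ℕ → ℝ) (L : ℝ), (∀ n, Tendsto (fun m => f (t + β n + γ m)) atTop (𝓝 (h n))) ∧
      Tendsto h atTop (𝓝 L) ∧ Tendsto (fun n => f (t + β n + γ n)) atTop (𝓝 L) := by
  choose G hG using fun u => cauchySeq_tendsto_of_complete (hγ.cauchySeq (mem_univ u))
  obtain ⟨L, hL⟩ := cauchySeq_tendsto_of_complete (hβγ.cauchySeq (mem_univ t))
  simp only [← add_assoc] at hL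
  have hunif := tendstoUniformlyOn_univ.1 (hγ.tendstoUniformlyOn_of_tendsto fun u _ => hG u)
  have hclose : Tendsto (fun n => (G (t + β n), f (t + β n + γ n))) atTop (𝓤 ℝ) :=
    (tendstoUniformly_iff_tendsto.1 hunif).comp (tendsto_id.prodMk tendsto_top)
  exact ⟨fun n => G (t + β n), L, fun n => hG _, (Uniform.tendsto_congr hclose).2 hL, hL⟩

theorem forall_relativelyDense_periods_of_uniformCauchySeqOn_translate {f : ℝ → ℝ}
    (hf : ∀ s : ℕ → ℝ, ∃ φ : ℕ → ℕ, StrictMono φ ∧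
      UniformCauchySeqOn (fun k t => f (t + s (φ k))) atTop univ) :
    ∀ ε > 0, ∃ l > 0, ∀ a, ∃ τ ∈ Icc a (a + l), ∀ t, |f (t + τ) - f t| < ε := by
  intro ε hε
  by_contra hdense
  obtain ⟨s, hs⟩ := exists_seq_sub_notMem_of_not_relativelyDense
    (P := {τ | ∀ t, |f (t + τ) - f t| < ε}) hdense
  obtain ⟨φ, hφ, hcauchy⟩ := hf s
  obtain ⟨N, hN⟩ := Metric.uniformCauchySeqOn_iff.1 hcauchy ε hε
  refine hs (φ N) (φ (N + 1)) (hφ N.lt_succ_self) fun t => ?_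
  have hclose := hN (N + 1) N.le_succ N le_rfl (t - s (φ N)) trivial
  rwa [Real.dist_eq, sub_add_cancel, sub_add_eq_add_sub, add_sub_assoc] at hclose

def DoubleSequenceCriterion (f : ℝ → ℝ) : Prop :=
  ∀ β γ : ℕ → ℝ, ∃ φ : ℕ → ℕ, StrictMono φ ∧ ∀ t, ∃ (h : ℕ → ℝ) (L : ℝ),
    (∀ n, Tendsto (fun m => f (t + β (φ n) + γ (φ m))) atTop (𝓝 (h n))) ∧
      Tendsto h atTop (𝓝 L) ∧ Tendsto (fun n => f (t + β (φ n) + γ (φ n))) atTop (𝓝 L)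

namespace DoubleSequenceCriterion

variable {f : ℝ → ℝ}

theorem exists_tendsto_translate (hf : DoubleSequenceCriterion f) (α : ℕ → ℝ) :
    ∃ φ : ℕ → ℕ, StrictMono φ ∧ ∃ F : ℝ → ℝ,
      ∀ t, Tendsto (fun m => f (t + α (φ m))) atTop (𝓝 (F t)) := by
  obtain ⟨φ, hφ, hlim⟩ := hf 0 α
  choose h L hh using hlim
  exact ⟨φ, hφ, fun t => h t 0, fun t => by simpa using (hh t).1 0⟩

theorem tendstoUniformly_translate (hf : DoubleSequenceCriterion f) {α : ℕ → ℝ} {F : ℝ → ℝ}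
    (hF : ∀ t, Tendsto (fun m => f (t + α m)) atTop (𝓝 (F t))) :
    TendstoUniformly (fun m t => f (t + α m)) F atTop := by
  rw [Metric.tendstoUniformly_iff]
  by_contra! hbad
  obtain ⟨ε, hε, hfreq⟩ := hbad
  obtain ⟨ms, hms, hfar⟩ := extraction_of_frequently_atTop hfreq
  choose ts hts using hfar
  obtain ⟨ψ, hψ, hlim⟩ := hf ts (α ∘ ms)
  obtain ⟨h, L, hinner, hh, hdiag⟩ := hlim 0
  have hhF : h = fun j => F (ts (ψ j)) := funext fun j =>
    tendsto_nhds_unique (by simpa [Function.comp_def] using hinner j)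
      ((hF _).comp (hms.comp hψ).tendsto_atTop)
  have hdist : Tendsto (fun j => dist (F (ts (ψ j))) (f (ts (ψ j) + α (ms (ψ j))))) atTop
      (𝓝 (dist L L)) := (hhF ▸ hh).dist (by simpa using hdiag)
  rw [dist_self] at hdist
  exact hε.not_ge (ge_of_tendsto' hdist fun j => hts (ψ j))

theorem exists_strictMono_uniformCauchySeqOn_translate (hf : DoubleSequenceCriterion f)
    (s : ℕ → ℝ) : ∃ φ : ℕ → ℕ, StrictMono φ ∧
      UniformCauchySeqOn (fun k t => f (t + s (φ k))) atTop univ := by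
  obtain ⟨φ, hφ, F, hF⟩ := hf.exists_tendsto_translate s
  exact ⟨φ, hφ, (tendstoUniformlyOn_univ.2 (hf.tendstoUniformly_translate hF)).uniformCauchySeqOn⟩

theorem bohrAlmostPeriodic (hcont : Continuous f) (hf : DoubleSequenceCriterion f) :
    BohrAlmostPeriodic f :=
  ⟨hcont, forall_relativelyDense_periods_of_uniformCauchySeqOn_translate
    hf.exists_strictMono_uniformCauchySeqOn_translate⟩

end DoubleSequenceCriterion

theorem almost_periodic_uniformly_iff_double_sequence_criterion_general
    (n : ℕ)
    (K : Set (EuclideanSpace ℝ (Fin n)))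
    (g : ℝ → EuclideanSpace ℝ (Fin n) → ℝ) :
    AlmostPeriodicUniformlyIn g K ↔
      (UniformContinuousOn (fun p : ℝ × EuclideanSpace ℝ (Fin n) => g p.1 p.2)
          (Set.univ ×ˢ K) ∧
        ∀ β' γ' : ℕ → ℝ, ∃ φ : ℕ → ℕ, StrictMono φ ∧
          ∀ (t : ℝ), ∀ x ∈ K, ∃ (h : ℕ → ℝ) (L : ℝ),
            (∀ n' : ℕ, Filter.Tendsto (fun m => g (t + β' (φ n') + γ' (φ m)) x)
              Filter.atTop (nhds (h n'))) ∧
            Filter.Tendsto h Filter.atTop (nhds L) ∧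
            Filter.Tendsto (fun n' => g (t + β' (φ n') + γ' (φ n')) x)
              Filter.atTop (nhds L)) := by
  constructor
  · rintro ⟨hUC, hap⟩
    refine ⟨hUC, fun β γ => ?_⟩
    have hK : IsSeparable K := .of_separableSpace K
    obtain ⟨φ₁, hφ₁, hγ⟩ := exists_strictMono_uniformCauchySeqOn_translate hK hUC hap γ
    obtain ⟨φ₂, hφ₂, hβγ⟩ :=
      exists_strictMono_uniformCauchySeqOn_translate hK hUC hap fun k => β (φ₁ k) + γ (φ₁ k)
    exact ⟨φ₁ ∘ φ₂, hφ₁.comp hφ₂, fun t x hx => exists_iterated_limit_eq_diagonal_limit (f := (g · x))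
      ((hγ x hx).comp_tendsto hφ₂.tendsto_atTop) (hβγ x hx) t⟩
  · rintro ⟨hUC, hcrit⟩
    refine ⟨hUC, fun x hx => DoubleSequenceCriterion.bohrAlmostPeriodic
      (uniformContinuous_section hUC hx).continuous fun β γ => ?_⟩
    obtain ⟨φ, hφ, hlim⟩ := hcrit β γ
    exact ⟨φ, hφ, fun t => hlim t x hx⟩

/-- `g` is almost periodic in `t` uniformly with respect to `x ∈ K` if and
only if `g` is uniformly continuous on `ℝ × K` and for any two sequences `{β'_n}, {γ'_n}`
there are subsequences (extracted with the same indices) such that, for every `(t, x)`,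
the iterated limit `lim_n lim_m g(t + β_n + γ_m, x)` and the diagonal limit
`lim_n g(t + β_n + γ_n, x)` both exist and coincide. -/
theorem almost_periodic_uniformly_iff_double_sequence_criterion
    (n : ℕ) (hn : 1 ≤ n)
    (K : Set (EuclideanSpace ℝ (Fin n))) (hK : IsCompact K)
    (g : ℝ → EuclideanSpace ℝ (Fin n) → ℝ)
    (hg : ContinuousOn (fun p : ℝ × EuclideanSpace ℝ (Fin n) => g p.1 p.2)
      (Set.univ ×ˢ K)) :
    AlmostPeriodicUniformlyIn g K ↔
      (UniformContinuousOn (fun p : ℝ × EuclideanSpace ℝ (Fin n) => g p.1 p.2)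
          (Set.univ ×ˢ K) ∧
        ∀ β' γ' : ℕ → ℝ, ∃ φ : ℕ → ℕ, StrictMono φ ∧
          ∀ (t : ℝ), ∀ x ∈ K, ∃ (h : ℕ → ℝ) (L : ℝ),
            (∀ n' : ℕ, Filter.Tendsto (fun m => g (t + β' (φ n') + γ' (φ m)) x)
              Filter.atTop (nhds (h n'))) ∧
            Filter.Tendsto h Filter.atTop (nhds L) ∧
            Filter.Tendsto (fun n' => g (t + β' (φ n') + γ' (φ n')) x)
              Filter.atTop (nhds L)) :=
  almost_periodic_uniformly_iff_double_sequence_criterion_general n K g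
end
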